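/- arXiv:2009.01276 — 3 statements merged into one kernel-verified Lean document; each statement's English description precedes it below -/
import Mathlib

section
/- Let W be a standard Brownian motion and for x in [a,b] let sigma^x = inf{t >= 0 : x + W_t not in [a,b]} be the exit time from the closed interval. Then for every x in [a,b], liminf over any sequence x_n -> x (with x_n in (a,b)) of the open-interval exit times tau^{x_n} is at least tau^x, and limsup of the closed-interval exit times sigma^{x_n} is at most sigma^x, pathwise (for every omega). -/
open MeasureTheory ProbabilityTheory Filter Set
open scoped ENNReal NNReal

/-- A standard one-dimensional Brownian motion: starts at `0`, has continuous paths,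
Gaussian increments of the right variance, and independent increments. -/
def IsBrownianMotion {Ω : Type*} [MeasureSpace Ω] (W : ℝ → Ω → ℝ) : Prop :=
  (∀ ω, W 0 ω = 0) ∧ (∀ ω, Continuous fun t => W t ω) ∧
  (∀ s t : ℝ, 0 ≤ s → s ≤ t →
    Measure.map (fun ω => W t ω - W s ω) ℙ = gaussianReal 0 (Real.toNNReal (t - s))) ∧
  (∀ n : ℕ, ∀ t : ℕ → ℝ, Monotone t → 0 ≤ t 0 →
    iIndepFun
      (fun i : Fin n => fun ω => W (t (i + 1)) ω - W (t i) ω) ℙ)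

/-- The first exit time of `x + W` from the set `A`, with the convention
`inf ∅ = ∞`. -/
noncomputable def exitTimeFrom {Ω : Type*} (W : ℝ → Ω → ℝ) (A : Set ℝ) (x : ℝ)
    (ω : Ω) : ℝ≥0∞ :=
  ⨅ s ∈ {s : ℝ | 0 ≤ s ∧ x + W s ω ∉ A}, ENNReal.ofReal s

/-!
Only the path `s ↦ W s ω` matters. Moving the starting point moves the whole path rigidly.
Exiting the closed interval means reaching the open set `[a,b]ᶜ` at some time `s`, which
persists under small shifts, so the exit time is upper semicontinuous. Staying in the open
interval up to time `t` means that the compact image of `[0,t]` lies in `(a,b)`, hence at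
positive distance from its complement, which also persists under small shifts, so the exit
time is lower semicontinuous.
-/

section exitTimeFrom

variable {Ω : Type*} {W : ℝ → Ω → ℝ} {A : Set ℝ} {ω : Ω}

theorem exitTimeFrom_le_ofReal {x s : ℝ} (hs : 0 ≤ s) (hx : x + W s ω ∉ A) :
    exitTimeFrom W A x ω ≤ ENNReal.ofReal s :=
  iInf₂_le s ⟨hs, hx⟩

theorem ofReal_le_exitTimeFrom {x t : ℝ} (h : ∀ s ∈ Icc 0 t, x + W s ω ∈ A) :
    ENNReal.ofReal t ≤ exitTimeFrom W A x ω :=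
  le_iInf₂ fun s hs =>
    ENNReal.ofReal_le_ofReal <| not_lt.1 fun hst => hs.2 (h s ⟨hs.1, hst.le⟩)

theorem upperSemicontinuous_exitTimeFrom (hA : IsClosed A) :
    UpperSemicontinuous fun x => exitTimeFrom W A x ω := by
  intro x y hy
  obtain ⟨s, ⟨hs, hxs⟩, hsy⟩ :
      ∃ s ∈ {s : ℝ | 0 ≤ s ∧ x + W s ω ∉ A}, ENNReal.ofReal s < y := by
    simpa only [exitTimeFrom, iInf_lt_iff, exists_prop] using hy
  have hexit : IsOpen {x' : ℝ | x' + W s ω ∉ A} :=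
    hA.isOpen_compl.preimage (continuous_id.add continuous_const)
  filter_upwards [hexit.mem_nhds hxs] with x' hx'
  exact (exitTimeFrom_le_ofReal hs hx').trans_lt hsy

theorem lowerSemicontinuous_exitTimeFrom (hA : IsOpen A)
    (hcont : Continuous fun t => W t ω) :
    LowerSemicontinuous fun x => exitTimeFrom W A x ω := by
  intro x y hy
  obtain ⟨t, -, hyt, hty⟩ := ENNReal.lt_iff_exists_real_btwn.1 hy
  have hpath : ∀ s ∈ Icc 0 t, x + W s ω ∈ A := fun s hs => by
    by_contra hxs
    exact hty.not_ge <| (exitTimeFrom_le_ofReal hs.1 hxs).trans (ENNReal.ofReal_le_ofReal hs.2)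
  have hK : IsCompact ((fun s => x + W s ω) '' Icc 0 t) :=
    isCompact_Icc.image (continuous_const.add hcont)
  obtain ⟨δ, hδ, hδA⟩ := hK.exists_thickening_subset_open hA (image_subset_iff.2 hpath)
  filter_upwards [Metric.ball_mem_nhds x hδ] with x' hx'
  refine hyt.trans_le (ofReal_le_exitTimeFrom fun s hs => hδA ?_)
  refine Metric.mem_thickening_iff.2 ⟨x + W s ω, mem_image_of_mem _ hs, ?_⟩
  rwa [Real.dist_eq, add_sub_add_right_eq_sub, ← Real.dist_eq]

end exitTimeFrom

theorem brownian_exitTime_semicontinuous_general {Ω : Type*} [MeasureSpace Ω]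
    (W : ℝ → Ω → ℝ) (hW : IsBrownianMotion W) (a b : ℝ)
    (x : ℝ) (xn : ℕ → ℝ)
    (hlim : Tendsto xn atTop (nhds x)) :
    (∀ ω : Ω, exitTimeFrom W (Ioo a b) x ω ≤
      Filter.liminf (fun n => exitTimeFrom W (Ioo a b) (xn n) ω) atTop) ∧
    (∀ ω : Ω, Filter.limsup (fun n => exitTimeFrom W (Icc a b) (xn n) ω) atTop ≤
      exitTimeFrom W (Icc a b) x ω) := by
  refine ⟨fun ω => ?_, fun ω => ?_⟩
  · calc exitTimeFrom W (Ioo a b) x ω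
        ≤ liminf (fun y => exitTimeFrom W (Ioo a b) y ω) (nhds x) :=
          (lowerSemicontinuous_exitTimeFrom isOpen_Ioo (hW.2.1 ω)).le_liminf x
      _ ≤ liminf (fun y => exitTimeFrom W (Ioo a b) y ω) (map xn atTop) :=
          liminf_le_liminf_of_le hlim
      _ = liminf (fun n => exitTimeFrom W (Ioo a b) (xn n) ω) atTop := (liminf_comp _ _ _).symm
  · calc limsup (fun n => exitTimeFrom W (Icc a b) (xn n) ω) atTop
        = limsup (fun y => exitTimeFrom W (Icc a b) y ω) (map xn atTop) := limsup_comp _ _ _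
      _ ≤ limsup (fun y => exitTimeFrom W (Icc a b) y ω) (nhds x) := limsup_le_limsup_of_le hlim
      _ ≤ exitTimeFrom W (Icc a b) x ω :=
          (upperSemicontinuous_exitTimeFrom isClosed_Icc).limsup_le x

/-- Pathwise semicontinuity of Brownian exit times in the starting point:
for every sample path, the exit time from the open interval `(a,b)` is lower
semicontinuous along sequences `xₙ → x`, and the exit time from the closed
interval `[a,b]` is upper semicontinuous along such sequences. -/
theorem brownian_exitTime_semicontinuous {Ω : Type*} [MeasureSpace Ω]
    [IsProbabilityMeasure (ℙ : Measure Ω)]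
    (W : ℝ → Ω → ℝ) (hW : IsBrownianMotion W) (a b : ℝ) (hab : a < b)
    (x : ℝ) (hx : x ∈ Icc a b) (xn : ℕ → ℝ) (hxn : ∀ n, xn n ∈ Ioo a b)
    (hlim : Tendsto xn atTop (nhds x)) :
    (∀ ω : Ω, exitTimeFrom W (Ioo a b) x ω ≤
      Filter.liminf (fun n => exitTimeFrom W (Ioo a b) (xn n) ω) atTop) ∧
    (∀ ω : Ω, Filter.limsup (fun n => exitTimeFrom W (Icc a b) (xn n) ω) atTop ≤
      exitTimeFrom W (Icc a b) x ω) :=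
  brownian_exitTime_semicontinuous_general W hW a b x xn hlim
end

section
/- Let c : [a,b] -> [0,T] be lower semi-continuous and suppose the connectedness property holds: for all x_1 < x_2 in [a,b], c(x) <= c(x_1) vee c(x_2) for every x in [x_1, x_2]. Then the set Sigma of minimisers of c on [a,b] is a nonempty closed interval [a_*, b_*], and c is strictly decreasing on [a, a_*) and strictly increasing on (b_*, b], provided additionally that c admits no nondegenerate flat stretch at a positive level (i.e., c constant and positive on a nondegenerate subinterval is impossible). -/
/-!
Lower semicontinuity on the compact interval makes the set of minimisers nonempty and compact,
and the connectedness property makes it order-connected, so it is an interval `[a⋆, b⋆]`.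
Left of a minimiser `p` the connectedness property on `[x, p]` makes `c` antitone; a failure of
strict monotonicity there would give a flat stretch, which can only sit at level `0`, i.e. at the
minimum, contradicting the minimality of `a⋆`. The right side is the same statement for the
order dual.
-/

open Set

theorem LowerSemicontinuousOn.isCompact_minimizers {X β : Type*} [TopologicalSpace X]
    [LinearOrder β] {f : X → β} {s : Set X}
    (hf : LowerSemicontinuousOn f s) (hs : IsCompact s) :
    IsCompact {x | x ∈ s ∧ ∀ y ∈ s, f x ≤ f y} := by
  rcases s.eq_empty_or_nonempty with rfl | hne
  · simp
  obtain ⟨p, hp, hmin⟩ := hf.exists_isMinOn hne hs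
  convert hf.isCompact_inter_preimage_Iic hs (f p) using 1
  ext x
  exact ⟨fun hx => ⟨hx.1, hx.2 p hp⟩, fun hx => ⟨hx.1, fun y hy => hx.2.trans (hmin hy)⟩⟩

section

variable {α β : Type*} [LinearOrder α] [LinearOrder β] {s : Set α} {f : α → β} {p : α}

/-- The connectedness property; equivalently, the sublevel sets of `f` on `s` are order-connected. -/
def ConnectedSublevelsOn (f : α → β) (s : Set α) : Prop :=
  ∀ x₁ ∈ s, ∀ x₂ ∈ s, x₁ < x₂ → ∀ x ∈ Icc x₁ x₂, f x ≤ max (f x₁) (f x₂)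

theorem ConnectedSublevelsOn.dual (hf : ConnectedSublevelsOn f s) :
    ConnectedSublevelsOn (f ∘ OrderDual.ofDual) (OrderDual.ofDual ⁻¹' s) :=
  fun x₁ h₁ x₂ h₂ hlt x hx => max_comm (f x₁) (f x₂) ▸ hf x₂ h₂ x₁ h₁ hlt x ⟨hx.2, hx.1⟩

theorem ConnectedSublevelsOn.ordConnected_minimizers [s.OrdConnected]
    (hf : ConnectedSublevelsOn f s) :
    OrdConnected {x | x ∈ s ∧ ∀ y ∈ s, f x ≤ f y} := by
  refine ⟨fun x₁ h₁ x₂ h₂ x hx => ⟨Set.Icc_subset s h₁.1 h₂.1 hx, fun y hy => ?_⟩⟩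
  rcases hx.1.eq_or_lt with rfl | hlt
  · exact h₁.2 y hy
  · calc f x ≤ max (f x₁) (f x₂) := hf x₁ h₁.1 x₂ h₂.1 (hlt.trans_le hx.2) x hx
      _ ≤ f y := max_le (h₁.2 y hy) (h₂.2 y hy)

theorem ConnectedSublevelsOn.antitoneOn_inter_Iic (hf : ConnectedSublevelsOn f s)
    (hp : p ∈ s) (hmin : ∀ y ∈ s, f p ≤ f y) : AntitoneOn f (s ∩ Iic p) := by
  intro x hx y hy hxy
  rcases hx.2.eq_or_lt with rfl | hlt
  · rw [le_antisymm hy.2 hxy]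
  · calc f y ≤ max (f x) (f p) := hf x hx.1 p hp hlt y ⟨hxy, hy.2⟩
      _ = f x := max_eq_left (hmin x hx.1)

theorem ConnectedSublevelsOn.strictAntiOn_inter_Iio [s.OrdConnected]
    (hf : ConnectedSublevelsOn f s)
    (hflat : ∀ x₁ ∈ s, ∀ x₂ ∈ s, x₁ < x₂ → ∀ v, (∀ x ∈ Icc x₁ x₂, f x = v) → ∀ y ∈ s, v ≤ f y)
    (hp : IsLeast {x | x ∈ s ∧ ∀ y ∈ s, f x ≤ f y} p) : StrictAntiOn f (s ∩ Iio p) := by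
  have hanti := hf.antitoneOn_inter_Iic hp.1.1 hp.1.2
  intro x hx y hy hxy
  by_contra! hle
  have hsub : Icc x y ⊆ s ∩ Iic p := fun z hz =>
    ⟨Set.Icc_subset s hx.1 hy.1 hz, hz.2.trans hy.2.le⟩
  have hconst : ∀ z ∈ Icc x y, f z = f x := fun z hz =>
    le_antisymm (hanti ⟨hx.1, hx.2.le⟩ (hsub hz) hz.1)
      (hle.trans (hanti (hsub hz) ⟨hy.1, hy.2.le⟩ hz.2))
  have hxmin : x ∈ {x | x ∈ s ∧ ∀ y ∈ s, f x ≤ f y} :=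
    ⟨hx.1, hflat x hx.1 y hy.1 hxy (f x) hconst⟩
  exact (hp.2 hxmin).not_gt hx.2

theorem ConnectedSublevelsOn.strictMonoOn_inter_Ioi [s.OrdConnected]
    (hf : ConnectedSublevelsOn f s)
    (hflat : ∀ x₁ ∈ s, ∀ x₂ ∈ s, x₁ < x₂ → ∀ v, (∀ x ∈ Icc x₁ x₂, f x = v) → ∀ y ∈ s, v ≤ f y)
    (hp : IsGreatest {x | x ∈ s ∧ ∀ y ∈ s, f x ≤ f y} p) : StrictMonoOn f (s ∩ Ioi p) :=
  fun _ hx _ hy hxy =>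
    hf.dual.strictAntiOn_inter_Iio (α := αᵒᵈ)
      (fun x₁ h₁ x₂ h₂ hlt v hv => hflat x₂ h₂ x₁ h₁ hlt v fun x hx => hv x ⟨hx.2, hx.1⟩)
      hp.dual hy hx hxy

end

theorem boundary_monotonicity_general (a b T : ℝ) (hab : a < b)
    (c : ℝ → ℝ)
    (hrange : ∀ x ∈ Icc a b, c x ∈ Icc 0 T)
    (hlsc : LowerSemicontinuousOn c (Icc a b))
    (hconn : ∀ x₁ ∈ Icc a b, ∀ x₂ ∈ Icc a b, x₁ < x₂ →
      ∀ x ∈ Icc x₁ x₂, c x ≤ max (c x₁) (c x₂))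
    (hnoflat : ∀ x₁ ∈ Icc a b, ∀ x₂ ∈ Icc a b, x₁ < x₂ →
      (∀ x ∈ Icc x₁ x₂, c x = c x₁) → c x₁ = 0) :
    ∃ astar ∈ Icc a b, ∃ bstar ∈ Icc a b, astar ≤ bstar ∧
      {x | x ∈ Icc a b ∧ ∀ y ∈ Icc a b, c x ≤ c y} = Icc astar bstar ∧
      StrictAntiOn c (Ico a astar) ∧ StrictMonoOn c (Ioc bstar b) := by
  have hconn' : ConnectedSublevelsOn c (Icc a b) := hconn
  obtain ⟨p, hp, hmin⟩ := hlsc.exists_isMinOn (nonempty_Icc.2 hab.le) isCompact_Icc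
  set Sig := {x | x ∈ Icc a b ∧ ∀ y ∈ Icc a b, c x ≤ c y}
  have hpSig : p ∈ Sig := ⟨hp, isMinOn_iff.1 hmin⟩
  have hSig : Sig = Icc (sInf Sig) (sSup Sig) := eq_Icc_of_connected_compact
    ⟨⟨p, hpSig⟩, hconn'.ordConnected_minimizers.isPreconnected⟩
    (hlsc.isCompact_minimizers isCompact_Icc)
  have hle : sInf Sig ≤ sSup Sig := nonempty_Icc.1 (hSig ▸ ⟨p, hpSig⟩)
  have hleast : IsLeast Sig (sInf Sig) := (hSig.symm ▸ isLeast_Icc hle :)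
  have hgreatest : IsGreatest Sig (sSup Sig) := (hSig.symm ▸ isGreatest_Icc hle :)
  have hflat : ∀ x₁ ∈ Icc a b, ∀ x₂ ∈ Icc a b, x₁ < x₂ →
      ∀ v, (∀ x ∈ Icc x₁ x₂, c x = v) → ∀ y ∈ Icc a b, v ≤ c y := by
    intro x₁ h₁ x₂ h₂ hlt v hv y hy
    have hv₁ := hv x₁ (left_mem_Icc.2 hlt.le)
    rw [← hv₁, hnoflat x₁ h₁ x₂ h₂ hlt fun x hx => (hv x hx).trans hv₁.symm]
    exact (hrange y hy).1
  refine ⟨sInf Sig, hleast.1.1, sSup Sig, hgreatest.1.1, hle, hSig, ?_, ?_⟩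
  · exact (hconn'.strictAntiOn_inter_Iio hflat hleast).mono
      fun x hx => ⟨⟨hx.1, hx.2.le.trans hleast.1.1.2⟩, hx.2⟩
  · exact (hconn'.strictMonoOn_inter_Ioi hflat hgreatest).mono
      fun x hx => ⟨⟨hgreatest.1.1.1.trans hx.1.le, hx.2⟩, hx.1⟩

/-- Structure of the optimal stopping boundary `x ↦ c(x)` on `[a,b]`: if `c` is
lower semicontinuous with values in `[0,T]`, satisfies the connectedness property
`c(x) ≤ c(x₁) ∨ c(x₂)` for `x ∈ [x₁,x₂]`, and admits no nondegenerate flat stretch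
at a positive level, then the set of minimisers of `c` on `[a,b]` is a nonempty
closed interval `[a⋆, b⋆]`, `c` is strictly decreasing on `[a, a⋆)` and strictly
increasing on `(b⋆, b]`. -/
theorem boundary_monotonicity (a b T : ℝ) (hab : a < b) (hT : 0 < T)
    (c : ℝ → ℝ)
    (hrange : ∀ x ∈ Icc a b, c x ∈ Icc 0 T)
    (hlsc : LowerSemicontinuousOn c (Icc a b))
    (hconn : ∀ x₁ ∈ Icc a b, ∀ x₂ ∈ Icc a b, x₁ < x₂ →
      ∀ x ∈ Icc x₁ x₂, c x ≤ max (c x₁) (c x₂))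
    (hnoflat : ∀ x₁ ∈ Icc a b, ∀ x₂ ∈ Icc a b, x₁ < x₂ →
      (∀ x ∈ Icc x₁ x₂, c x = c x₁) → c x₁ = 0) :
    ∃ astar ∈ Icc a b, ∃ bstar ∈ Icc a b, astar ≤ bstar ∧
      {x | x ∈ Icc a b ∧ ∀ y ∈ Icc a b, c x ≤ c y} = Icc astar bstar ∧
      StrictAntiOn c (Ico a astar) ∧ StrictMonoOn c (Ioc bstar b) :=
  boundary_monotonicity_general a b T hab c hrange hlsc hconn hnoflat
end

section
/- Let v in C^{1,2} on an open set O = (t_0, t_1) x (x_0 - delta, x_0 + delta) satisfy partial_t v + (sigma^2/2) partial_{xx} v = r v on O with r >= 0, and suppose hat-v := partial_t v satisfies: hat-v <= 0 on the lateral boundary {(t, x_0 +/ - delta) : t in [t_0, t_1)}, hat-v < -epsilon/2 on the terminal slice {t_1} x (x_0 - delta, x_0 + delta), and hat-v itself solves partial_t hat-v + (sigma^2/2) partial_{xx} hat-v = r hat-v on O. If the diffusion started inside O reaches the terminal slice {t_1} before exiting laterally with positive probability, then hat-v(t_0, x_0) < 0. -/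
/-!
A barrier argument. With `c = π / (2δ)` and `K` larger than `r + (σ²/2) c²` on
`[x₀ - δ, x₀ + δ]`, the function `B(t, x) = e^{K (t - t₁)} cos (c (x - x₀))` vanishes on the
lateral sides, is at most `1` on the terminal slice, is positive inside, and satisfies
`∂ₜB + (σ²/2) ∂ₓₓB - r B = (K - r - (σ²/2) c²) B > 0` there. Hence `F = v̂ + (ε/2) B` is `≤ 0`
on the parabolic boundary (at the corners by continuity), and `F` has no nonnegative maximum
off it: there `∂ₜF ≤ 0` and `∂ₓₓF ≤ 0`, while the equation for `v̂` and `r ≥ 0` force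
`∂ₜF > 0`. So `F ≤ 0` on the closed rectangle, and `v̂(t₀, x₀) ≤ -(ε/2) B(t₀, x₀) < 0`.
-/

open MeasureTheory ProbabilityTheory Filter Set
open scoped ENNReal NNReal

/-- `X` is a (driftless) diffusion with diffusion coefficient `σ` started at `x₀`:
it has continuous adapted paths and solves the martingale problem for the
generator `(σ²/2) ∂ₓₓ`, which is the weak formulation of `dX = σ(X) dB`. -/
def SolvesSDE {Ω : Type*} {m : MeasurableSpace Ω} (ℱ : Filtration ℝ m) (μ : Measure Ω)
    (σ : ℝ → ℝ) (X : ℝ → Ω → ℝ) (x₀ : ℝ) : Prop :=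
  (∀ ω, X 0 ω = x₀) ∧ (∀ ω, Continuous fun t => X t ω) ∧
  Adapted ℱ X ∧
  ∀ f : ℝ → ℝ, ContDiff ℝ 2 f →
    Martingale (fun t ω => f (X t ω) -
      ∫ s in (0:ℝ)..t, σ (X s ω) ^ 2 / 2 * deriv (deriv f) (X s ω)) ℱ μ

/-- `L z t` is the (semimartingale) local time of `X` at level `z` up to time `t`,
defined through the almost-sure occupation-density limit
`L^z_t = lim_{ε→0} (2ε)⁻¹ ∫_0^t 1_{X_s ∈ (z-ε,z+ε)} σ(X_s)² ds`. -/
def IsLocalTime {Ω : Type*} {m : MeasurableSpace Ω} (μ : Measure Ω) (σ : ℝ → ℝ)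
    (X : ℝ → Ω → ℝ) (L : ℝ → ℝ → Ω → ℝ) : Prop :=
  ∀ z t : ℝ, 0 ≤ t → ∀ᵐ ω ∂μ,
    Tendsto (fun ε : ℝ =>
        (2 * ε)⁻¹ * ∫ s in (0:ℝ)..t, indicator (Ioo (z - ε) (z + ε)) (fun y => σ y ^ 2) (X s ω))
      (nhdsWithin 0 (Ioi 0)) (nhds (L z t ω))

/-- `ell z t = ∫_0^t e^{-∫_0^s r(X_u) du} dL^z_s`, the `r`-discounted local time,
expressed through the Stieltjes measures `(Lst z ω).measure` of the
(nondecreasing) local-time paths. -/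
def IsDiscountedLocalTime {Ω : Type*} (r : ℝ → ℝ) (X : ℝ → Ω → ℝ)
    (Lst : ℝ → Ω → StieltjesFunction ℝ) (ell : ℝ → ℝ → Ω → ℝ) : Prop :=
  ∀ z t ω, ell z t ω =
    ∫ s in Ioc (0:ℝ) t, Real.exp (-(∫ u in (0:ℝ)..s, r (X u ω))) ∂((Lst z ω).measure)

/-- The first exit time of `X` from the set `A`, capped at `cap`. -/
noncomputable def cappedExitTime {Ω : Type*} (X : ℝ → Ω → ℝ) (A : Set ℝ) (cap : ℝ)
    (ω : Ω) : ℝ :=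
  sInf ({s : ℝ | 0 ≤ s ∧ X s ω ∉ A} ∪ {cap})

open Real
open scoped Topology

theorem HasDerivAt.nonpos_of_eventually_le_right {f : ℝ → ℝ} {f' a : ℝ} (hf : HasDerivAt f f' a)
    (hmax : ∀ᶠ t in 𝓝[>] a, f t ≤ f a) : f' ≤ 0 := by
  by_contra! hpos
  obtain ⟨t, hslope, hle, hat⟩ :=
    (((hasDerivAt_iff_tendsto_slope_left_right.1 hf).2.eventually (eventually_gt_nhds hpos)).and
      (hmax.and self_mem_nhdsWithin)).exists
  exact ((slope_pos_iff hat).1 hslope).not_ge hle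

theorem IsLocalMax.secondDeriv_nonpos {f f' : ℝ → ℝ} {x f'' : ℝ} (hmax : IsLocalMax f x)
    (hf : ∀ᶠ y in 𝓝 x, HasDerivAt f (f' y) y) (hf' : HasDerivAt f' f'' x) : f'' ≤ 0 := by
  by_contra! hpos
  have hf'x : f' x = 0 := hmax.hasDerivAt_eq_zero hf.self_of_nhds
  have hright : ∀ᶠ y in 𝓝[>] x, 0 < f' y ∧ HasDerivAt f (f' y) y ∧ f y ≤ f x := by
    filter_upwards [(hasDerivAt_iff_tendsto_slope_left_right.1 hf').2.eventually
      (eventually_gt_nhds hpos), self_mem_nhdsWithin, nhdsWithin_le_nhds hf,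
      nhdsWithin_le_nhds hmax] with y hslope hxy hd hy
    exact ⟨pos_of_slope_pos hxy hslope hf'x, hd, hy⟩
  obtain ⟨u, hxu : x < u, hu⟩ := mem_nhdsGT_iff_exists_Ioo_subset.1 hright
  obtain ⟨t, hxt, htu⟩ := exists_between hxu
  have hcont : ContinuousOn f (Icc x t) := by
    intro y hy
    rcases hy.1.eq_or_lt with rfl | hxy
    · exact hf.self_of_nhds.continuousAt.continuousWithinAt
    · exact (hu ⟨hxy, hy.2.trans_lt htu⟩).2.1.continuousAt.continuousWithinAt
  obtain ⟨ξ, hξ, hmvt⟩ := exists_hasDerivAt_eq_slope f f' hxt hcont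
    fun y hy => (hu ⟨hy.1, hy.2.trans htu⟩).2.1
  have hinc : 0 < f t - f x := by
    have := (hu ⟨hξ.1, hξ.2.trans htu⟩).1
    rwa [hmvt, div_pos_iff_of_pos_right (sub_pos.2 hxt)] at this
  linarith [(hu ⟨hxt, htu⟩).2.2]

theorem ContinuousOn.le_of_forall_Ico_le {φ : ℝ → ℝ} {a b c : ℝ} (hab : a < b)
    (hφ : ContinuousOn φ (Icc a b)) (h : ∀ t ∈ Ico a b, φ t ≤ c) : ∀ t ∈ Icc a b, φ t ≤ c := by
  intro t ht
  rcases ht.2.eq_or_lt with rfl | htb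
  · refine ContinuousWithinAt.closure_le (by simp [closure_Ico hab.ne, hab.le])
      ((hφ t ht).mono Ico_subset_Icc_self) continuousWithinAt_const h
  · exact h t ⟨ht.1, htb⟩

theorem nonpos_on_rectangle_of_parabolic_boundary {a b c d : ℝ} {F Ft Fx Fxx : ℝ → ℝ → ℝ}
    (hFt : ∀ t ∈ Ico a b, ∀ x ∈ Ioo c d, HasDerivAt (F · x) (Ft t x) t)
    (hFx : ∀ t ∈ Ico a b, ∀ x ∈ Ioo c d, HasDerivAt (F t ·) (Fx t x) x)
    (hFxx : ∀ t ∈ Ico a b, ∀ x ∈ Ioo c d, HasDerivAt (Fx t ·) (Fxx t x) x)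
    (hcont : ContinuousOn (Function.uncurry F) (Icc a b ×ˢ Icc c d))
    (hlat : ∀ t ∈ Icc a b, F t c ≤ 0 ∧ F t d ≤ 0) (hterm : ∀ x ∈ Ioo c d, F b x ≤ 0)
    (hstrict : ∀ t ∈ Ico a b, ∀ x ∈ Ioo c d, 0 ≤ F t x → Fxx t x ≤ 0 → 0 < Ft t x) :
    ∀ t ∈ Icc a b, ∀ x ∈ Icc c d, F t x ≤ 0 := by
  intro t ht x hx
  obtain ⟨⟨s, y⟩, ⟨hs, hy⟩, hmax⟩ :=
    (isCompact_Icc.prod isCompact_Icc).exists_isMaxOn ⟨(t, x), ht, hx⟩ hcont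
  have hle : ∀ s' ∈ Icc a b, ∀ y' ∈ Icc c d, F s' y' ≤ F s y :=
    fun s' hs' y' hy' => hmax (mk_mem_prod hs' hy')
  refine (hle t ht x hx).trans ?_
  rcases hy.1.eq_or_lt with rfl | hcy
  · exact (hlat s hs).1
  rcases hy.2.eq_or_lt with rfl | hyd
  · exact (hlat s hs).2
  rcases hs.2.eq_or_lt with rfl | hsb
  · exact hterm y ⟨hcy, hyd⟩
  have hs' : s ∈ Ico a b := ⟨hs.1, hsb⟩
  have hy' : y ∈ Ioo c d := ⟨hcy, hyd⟩
  by_contra! hpos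
  have hFt_nonpos : Ft s y ≤ 0 := by
    refine (hFt s hs' y hy').nonpos_of_eventually_le_right ?_
    filter_upwards [Ioc_mem_nhdsGT hsb] with s' hs''
    exact hle s' ⟨hs.1.trans hs''.1.le, hs''.2⟩ y hy
  have hFxx_nonpos : Fxx s y ≤ 0 := by
    refine IsLocalMax.secondDeriv_nonpos (f := (F s ·)) ?_ ?_ (hFxx s hs' y hy')
    · filter_upwards [Icc_mem_nhds hcy hyd] with y' hy'' using hle s hs y' hy''
    · filter_upwards [Ioo_mem_nhds hcy hyd] with y' hy'' using hFx s hs' y' hy''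
  exact (hstrict s hs' y hy' hpos.le hFxx_nonpos).not_ge hFt_nonpos

noncomputable def cosBarrier (K t₁ x₀ δ t x : ℝ) : ℝ :=
  exp (K * (t - t₁)) * cos (π / (2 * δ) * (x - x₀))

section cosBarrier

variable (K t₁ x₀ δ t x : ℝ)

theorem hasDerivAt_cosBarrier_time :
    HasDerivAt (cosBarrier K t₁ x₀ δ · x) (K * cosBarrier K t₁ x₀ δ t x) t := by
  have h : HasDerivAt (fun s => K * (s - t₁)) K t := by
    simpa using ((hasDerivAt_id t).sub_const t₁).const_mul K
  refine (h.exp.mul_const (cos (π / (2 * δ) * (x - x₀)))).congr_deriv ?_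
  simp only [cosBarrier]; ring

theorem hasDerivAt_cosBarrier_space :
    HasDerivAt (cosBarrier K t₁ x₀ δ t ·)
      (-(π / (2 * δ)) * exp (K * (t - t₁)) * sin (π / (2 * δ) * (x - x₀))) x := by
  have h : HasDerivAt (fun y => π / (2 * δ) * (y - x₀)) (π / (2 * δ)) x := by
    simpa using ((hasDerivAt_id x).sub_const x₀).const_mul (π / (2 * δ))
  refine (h.cos.const_mul (exp (K * (t - t₁)))).congr_deriv ?_
  ring

theorem hasDerivAt_cosBarrier_space_space :
    HasDerivAt (fun y => -(π / (2 * δ)) * exp (K * (t - t₁)) * sin (π / (2 * δ) * (y - x₀)))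
      (-(π / (2 * δ)) ^ 2 * cosBarrier K t₁ x₀ δ t x) x := by
  have h : HasDerivAt (fun y => π / (2 * δ) * (y - x₀)) (π / (2 * δ)) x := by
    simpa using ((hasDerivAt_id x).sub_const x₀).const_mul (π / (2 * δ))
  refine (h.sin.const_mul (-(π / (2 * δ)) * exp (K * (t - t₁)))).congr_deriv ?_
  simp only [cosBarrier]; ring

variable {δ x}

theorem cosBarrier_pos (hδ : 0 < δ) (hx : x ∈ Ioo (x₀ - δ) (x₀ + δ)) :
    0 < cosBarrier K t₁ x₀ δ t x := by
  have hc : π / (2 * δ) * δ = π / 2 := by field_simp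
  have hc₀ : 0 < π / (2 * δ) := by positivity
  refine mul_pos (exp_pos _) (cos_pos_of_mem_Ioo ⟨?_, ?_⟩)
  · nlinarith [mul_pos hc₀ (sub_pos.2 hx.1)]
  · nlinarith [mul_pos hc₀ (sub_pos.2 hx.2)]

theorem cosBarrier_sub (hδ : δ ≠ 0) : cosBarrier K t₁ x₀ δ t (x₀ - δ) = 0 := by
  have hc : π / (2 * δ) * δ = π / 2 := by field_simp
  simp [cosBarrier, hc]

theorem cosBarrier_add (hδ : δ ≠ 0) : cosBarrier K t₁ x₀ δ t (x₀ + δ) = 0 := by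
  have hc : π / (2 * δ) * δ = π / 2 := by field_simp
  simp [cosBarrier, hc]

theorem cosBarrier_terminal_le_one : cosBarrier K t₁ x₀ δ t₁ x ≤ 1 := by
  simpa [cosBarrier] using cos_le_one _

end cosBarrier

theorem add_mul_cosBarrier_nonpos {σ r : ℝ → ℝ} {t₀ t₁ x₀ δ η K : ℝ} (hδ : 0 < δ) (hη : 0 < η)
    (hr : ∀ y ∈ Icc (x₀ - δ) (x₀ + δ), 0 ≤ r y)
    (hK : ∀ y ∈ Icc (x₀ - δ) (x₀ + δ), r y + σ y ^ 2 / 2 * (π / (2 * δ)) ^ 2 < K)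
    {w wt wx wxx : ℝ → ℝ → ℝ}
    (hwt : ∀ p ∈ Icc t₀ t₁ ×ˢ Icc (x₀ - δ) (x₀ + δ),
      HasDerivAt (fun s => w s p.2) (wt p.1 p.2) p.1)
    (hwx : ∀ p ∈ Icc t₀ t₁ ×ˢ Icc (x₀ - δ) (x₀ + δ),
      HasDerivAt (fun y => w p.1 y) (wx p.1 p.2) p.2)
    (hwxx : ∀ p ∈ Icc t₀ t₁ ×ˢ Icc (x₀ - δ) (x₀ + δ),
      HasDerivAt (fun y => wx p.1 y) (wxx p.1 p.2) p.2)
    (hcont : ContinuousOn (fun p : ℝ × ℝ => w p.1 p.2) (Icc t₀ t₁ ×ˢ Icc (x₀ - δ) (x₀ + δ)))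
    (hpde : ∀ p ∈ Icc t₀ t₁ ×ˢ Icc (x₀ - δ) (x₀ + δ),
      wt p.1 p.2 + σ p.2 ^ 2 / 2 * wxx p.1 p.2 = r p.2 * w p.1 p.2)
    (hlat : ∀ t ∈ Icc t₀ t₁, w t (x₀ - δ) ≤ 0 ∧ w t (x₀ + δ) ≤ 0)
    (hterm : ∀ y ∈ Ioo (x₀ - δ) (x₀ + δ), w t₁ y ≤ -η) :
    ∀ t ∈ Icc t₀ t₁, ∀ x ∈ Icc (x₀ - δ) (x₀ + δ),
      w t x + η * cosBarrier K t₁ x₀ δ t x ≤ 0 := by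
  have mem {t x} (ht : t ∈ Ico t₀ t₁) (hx : x ∈ Ioo (x₀ - δ) (x₀ + δ)) :
      (t, x) ∈ Icc t₀ t₁ ×ˢ Icc (x₀ - δ) (x₀ + δ) :=
    ⟨Ico_subset_Icc_self ht, Ioo_subset_Icc_self hx⟩
  refine nonpos_on_rectangle_of_parabolic_boundary
    (Ft := fun t x => wt t x + η * (K * cosBarrier K t₁ x₀ δ t x))
    (Fx := fun t x => wx t x +
      η * (-(π / (2 * δ)) * exp (K * (t - t₁)) * sin (π / (2 * δ) * (x - x₀))))
    (Fxx := fun t x => wxx t x + η * (-(π / (2 * δ)) ^ 2 * cosBarrier K t₁ x₀ δ t x))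
    (fun t ht x hx => (hwt _ (mem ht hx)).add ((hasDerivAt_cosBarrier_time ..).const_mul η))
    (fun t ht x hx => (hwx _ (mem ht hx)).add ((hasDerivAt_cosBarrier_space ..).const_mul η))
    (fun t ht x hx => (hwxx _ (mem ht hx)).add
      ((hasDerivAt_cosBarrier_space_space ..).const_mul η))
    (hcont.add (by unfold cosBarrier; fun_prop))
    (fun t ht => by
      simp [cosBarrier_sub _ _ _ _ hδ.ne', cosBarrier_add _ _ _ _ hδ.ne', hlat t ht])
    (fun x hx => by
      have hB := cosBarrier_terminal_le_one K t₁ x₀ (δ := δ) (x := x)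
      nlinarith [hterm x hx])
    fun t ht x hx hF hFxx => ?_
  have hB := mul_pos hη (cosBarrier_pos K t₁ x₀ t hδ hx)
  have hσ : 0 ≤ σ x ^ 2 / 2 := by positivity
  have hpde := hpde _ (mem ht hx)
  nlinarith [mul_nonneg (hr x (Ioo_subset_Icc_self hx)) hF, mul_nonneg hσ (neg_nonneg.2 hFxx),
    mul_pos hB (sub_pos.2 (hK x (Ioo_subset_Icc_self hx)))]

theorem maximum_principle_time_derivative_general
    (σ r : ℝ → ℝ) (hσc : Continuous σ) (hrc : Continuous r) (hrnn : ∀ y, 0 ≤ r y)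
    (t₀ t₁ x₀ δ ε : ℝ) (ht : t₀ < t₁) (hδ : 0 < δ) (hε : 0 < ε)
    (vt vtt vtx vtxx : ℝ → ℝ → ℝ)
    -- `v` is C^{1,2} on the closed rectangle, with the indicated partial derivatives
    (hvtt : ∀ p ∈ Icc t₀ t₁ ×ˢ Icc (x₀ - δ) (x₀ + δ),
      HasDerivAt (fun s => vt s p.2) (vtt p.1 p.2) p.1)
    (hvtx : ∀ p ∈ Icc t₀ t₁ ×ˢ Icc (x₀ - δ) (x₀ + δ),
      HasDerivAt (fun y => vt p.1 y) (vtx p.1 p.2) p.2)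
    (hvtxx : ∀ p ∈ Icc t₀ t₁ ×ˢ Icc (x₀ - δ) (x₀ + δ),
      HasDerivAt (fun y => vtx p.1 y) (vtxx p.1 p.2) p.2)
    (hcont : ContinuousOn (fun p : ℝ × ℝ => vt p.1 p.2)
      (Icc t₀ t₁ ×ˢ Icc (x₀ - δ) (x₀ + δ)))
    -- the PDE for `v` and for `v̂ = ∂ₜ v`
    (hPDEt : ∀ p ∈ Icc t₀ t₁ ×ˢ Icc (x₀ - δ) (x₀ + δ),
      vtt p.1 p.2 + σ p.2 ^ 2 / 2 * vtxx p.1 p.2 = r p.2 * vt p.1 p.2)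
    -- boundary behaviour of `v̂`
    (hlat : ∀ t ∈ Ico t₀ t₁, vt t (x₀ - δ) ≤ 0 ∧ vt t (x₀ + δ) ≤ 0)
    (hfin : ∀ y ∈ Ioo (x₀ - δ) (x₀ + δ), vt t₁ y < -ε / 2) :
    vt t₀ x₀ < 0 := by
  obtain ⟨M, hM⟩ := isCompact_Icc.bddAbove_image
    (f := fun y => r y + σ y ^ 2 / 2 * (π / (2 * δ)) ^ 2) (by fun_prop)
  have hside {y} (hy : y ∈ Icc (x₀ - δ) (x₀ + δ)) : ContinuousOn (vt · y) (Icc t₀ t₁) :=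
    hcont.comp (continuous_id.prodMk continuous_const).continuousOn fun t ht => ⟨ht, hy⟩
  have hlatIcc (t) (htmem : t ∈ Icc t₀ t₁) : vt t (x₀ - δ) ≤ 0 ∧ vt t (x₀ + δ) ≤ 0 :=
    ⟨(hside ⟨le_rfl, by linarith⟩).le_of_forall_Ico_le ht (fun s hs => (hlat s hs).1) t htmem,
      (hside ⟨by linarith, le_rfl⟩).le_of_forall_Ico_le ht (fun s hs => (hlat s hs).2) t htmem⟩
  have hx₀ : x₀ ∈ Ioo (x₀ - δ) (x₀ + δ) := ⟨by linarith, by linarith⟩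
  have hbound := add_mul_cosBarrier_nonpos hδ (half_pos hε) (K := M + 1) (fun y _ => hrnn y)
    (fun y hy => by linarith [hM (mem_image_of_mem _ hy)]) hvtt hvtx hvtxx hcont hPDEt hlatIcc
    (fun y hy => by linarith [hfin y hy]) t₀ ⟨le_rfl, ht.le⟩ x₀ (Ioo_subset_Icc_self hx₀)
  linarith [mul_pos (half_pos hε) (cosBarrier_pos (M + 1) t₁ x₀ t₀ hδ hx₀)]

/-- Maximum-principle step for the strict time-monotonicity of the value function:
suppose `v` is `C^{1,2}` on the closed rectangle `R = [t₀,t₁] × [x₀-δ, x₀+δ]` and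
solves `∂ₜv + (σ²/2) ∂ₓₓv = r v` there, and that `v̂ := ∂ₜ v` also solves the same
equation, is `≤ 0` on the lateral boundary, and `< -ε/2` on the terminal slice
`{t₁} × (x₀-δ, x₀+δ)`.  If the diffusion started at `(t₀, x₀)` reaches the terminal
slice before exiting laterally with positive probability, then `v̂(t₀,x₀) < 0`. -/
theorem maximum_principle_time_derivative {Ω : Type*} {mΩ : MeasurableSpace Ω}
    (ℱ : Filtration ℝ mΩ) (P : Measure Ω) [IsProbabilityMeasure P]
    (σ r : ℝ → ℝ) (hσc : Continuous σ) (hrc : Continuous r) (hrnn : ∀ y, 0 ≤ r y)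
    (t₀ t₁ x₀ δ ε : ℝ) (ht : t₀ < t₁) (hδ : 0 < δ) (hε : 0 < ε)
    (v vt vx vxx vtt vtx vtxx : ℝ → ℝ → ℝ)
    -- `v` is C^{1,2} on the closed rectangle, with the indicated partial derivatives
    (hvt : ∀ p ∈ Icc t₀ t₁ ×ˢ Icc (x₀ - δ) (x₀ + δ),
      HasDerivAt (fun s => v s p.2) (vt p.1 p.2) p.1)
    (hvx : ∀ p ∈ Icc t₀ t₁ ×ˢ Icc (x₀ - δ) (x₀ + δ),
      HasDerivAt (fun y => v p.1 y) (vx p.1 p.2) p.2)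
    (hvxx : ∀ p ∈ Icc t₀ t₁ ×ˢ Icc (x₀ - δ) (x₀ + δ),
      HasDerivAt (fun y => vx p.1 y) (vxx p.1 p.2) p.2)
    (hvtt : ∀ p ∈ Icc t₀ t₁ ×ˢ Icc (x₀ - δ) (x₀ + δ),
      HasDerivAt (fun s => vt s p.2) (vtt p.1 p.2) p.1)
    (hvtx : ∀ p ∈ Icc t₀ t₁ ×ˢ Icc (x₀ - δ) (x₀ + δ),
      HasDerivAt (fun y => vt p.1 y) (vtx p.1 p.2) p.2)
    (hvtxx : ∀ p ∈ Icc t₀ t₁ ×ˢ Icc (x₀ - δ) (x₀ + δ),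
      HasDerivAt (fun y => vtx p.1 y) (vtxx p.1 p.2) p.2)
    (hcont : ContinuousOn (fun p : ℝ × ℝ => vt p.1 p.2)
      (Icc t₀ t₁ ×ˢ Icc (x₀ - δ) (x₀ + δ)))
    -- the PDE for `v` and for `v̂ = ∂ₜ v`
    (hPDE : ∀ p ∈ Icc t₀ t₁ ×ˢ Icc (x₀ - δ) (x₀ + δ),
      vt p.1 p.2 + σ p.2 ^ 2 / 2 * vxx p.1 p.2 = r p.2 * v p.1 p.2)
    (hPDEt : ∀ p ∈ Icc t₀ t₁ ×ˢ Icc (x₀ - δ) (x₀ + δ),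
      vtt p.1 p.2 + σ p.2 ^ 2 / 2 * vtxx p.1 p.2 = r p.2 * vt p.1 p.2)
    -- boundary behaviour of `v̂`
    (hlat : ∀ t ∈ Ico t₀ t₁, vt t (x₀ - δ) ≤ 0 ∧ vt t (x₀ + δ) ≤ 0)
    (hfin : ∀ y ∈ Ioo (x₀ - δ) (x₀ + δ), vt t₁ y < -ε / 2)
    -- the diffusion, and positive probability of reaching the terminal slice
    (X : ℝ → Ω → ℝ) (hX : SolvesSDE ℱ P σ X x₀)
    (hpos : 0 < P {ω | sInf {s : ℝ | 0 ≤ s ∧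
      (t₀ + s, X s ω) ∉ Ico t₀ t₁ ×ˢ Ioo (x₀ - δ) (x₀ + δ)} = t₁ - t₀}) :
    vt t₀ x₀ < 0 :=
  maximum_principle_time_derivative_general σ r hσc hrc hrnn t₀ t₁ x₀ δ ε ht hδ hε vt vtt vtx vtxx
    hvtt hvtx hvtxx hcont hPDEt hlat hfin
end
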